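/- Let λ₀, s₀ : ℝ → ℝ and let y be a real polynomial function of degree exactly n, with n ≥ 1, satisfying (Δ²y)(x) = λ₀(x)(Δy)(x) + s₀(x)y(x) for all real x. Then s_n(x)λ_{n−1}(x) − s_{n−1}(x)λ_n(x) = 0 for every real x with (Δy)(x) ≠ 0; in particular this holds for all but at most n−1 real values of x. -/
import Mathlib


/-- Forward difference operator: `(Δ f)(x) = f(x+1) - f(x)`. -/
noncomputable def fd (f : ℝ → ℝ) : ℝ → ℝ := fun x => f (x + 1) - f x

/-- The DAIM sequences `(λ_n, s_n)` built from `(λ₀, s₀)`. -/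
noncomputable def daim (l0 s0 : ℝ → ℝ) : ℕ → (ℝ → ℝ) × (ℝ → ℝ)
  | 0 => (l0, s0)
  | n + 1 =>
      (fun x => fd (daim l0 s0 n).1 x + (daim l0 s0 n).1 (x + 1) * l0 x
          + (daim l0 s0 n).2 (x + 1),
       fun x => fd (daim l0 s0 n).2 x + (daim l0 s0 n).1 (x + 1) * s0 x)

open Polynomial in
/-- Forward difference on polynomials. -/
noncomputable def pfd (Q : Polynomial ℝ) : Polynomial ℝ := Polynomial.taylor 1 Q - Q

lemma fd_eval (Q : Polynomial ℝ) :
    fd (fun x => Q.eval x) = fun x => (pfd Q).eval x := by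
  funext x
  simp [fd, pfd, Polynomial.taylor_eval]

lemma pfd_C (c : ℝ) : pfd (Polynomial.C c) = 0 := by
  simp [pfd]

lemma hasseDeriv_natDegree_eq (Q : Polynomial ℝ) :
    Polynomial.hasseDeriv Q.natDegree Q = Polynomial.C (Q.coeff Q.natDegree) := by
  have h1 : (Polynomial.hasseDeriv Q.natDegree Q).natDegree ≤ 0 := by
    have := Polynomial.natDegree_hasseDeriv_le Q Q.natDegree
    omega
  rw [Polynomial.eq_C_of_natDegree_le_zero h1]
  congr 1
  rw [Polynomial.hasseDeriv_coeff]
  simp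

lemma natDegree_pfd_le (Q : Polynomial ℝ) : (pfd Q).natDegree ≤ Q.natDegree - 1 := by
  rcases Nat.eq_zero_or_pos Q.natDegree with h0 | hpos
  · rw [Polynomial.eq_C_of_natDegree_le_zero h0.le, pfd_C]
    simp
  · rw [Polynomial.natDegree_le_iff_coeff_eq_zero]
    intro m hm
    have hm' : Q.natDegree ≤ m := by omega
    rcases eq_or_lt_of_le hm' with heq | hlt
    · rw [pfd, Polynomial.coeff_sub, ← heq, Polynomial.taylor_coeff,
        hasseDeriv_natDegree_eq]
      simp
    · rw [pfd, Polynomial.coeff_sub,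
        Polynomial.coeff_eq_zero_of_natDegree_lt
          (by rwa [Polynomial.natDegree_taylor]),
        Polynomial.coeff_eq_zero_of_natDegree_lt hlt, sub_zero]

lemma pfd_coeff_pred {Q : Polynomial ℝ} {n : ℕ} (hdeg : Q.natDegree = n)
    (hn : 1 ≤ n) : (pfd Q).coeff (n - 1) = (n : ℝ) * Q.leadingCoeff := by
  have hH : (Polynomial.hasseDeriv (n - 1) Q).natDegree ≤ 1 := by
    have := Polynomial.natDegree_hasseDeriv_le Q (n - 1)
    omega
  have hHc := Polynomial.eq_X_add_C_of_natDegree_le_one hH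
  have hc1 : (Polynomial.hasseDeriv (n - 1) Q).coeff 1 = (n : ℝ) * Q.coeff n := by
    rw [Polynomial.hasseDeriv_coeff]
    have h1 : 1 + (n - 1) = n := by omega
    rw [h1]
    have h2 : n.choose (n - 1) = n := by
      have := Nat.choose_symm hn (n := n)
      rw [this, Nat.choose_one_right]
    rw [h2]
  have hc0 : (Polynomial.hasseDeriv (n - 1) Q).coeff 0 = Q.coeff (n - 1) := by
    rw [Polynomial.hasseDeriv_coeff]
    simp
  rw [pfd, Polynomial.coeff_sub, Polynomial.taylor_coeff, hHc]
  simp only [Polynomial.eval_add, Polynomial.eval_mul, Polynomial.eval_C,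
    Polynomial.eval_X, mul_one]
  rw [hc0, hc1, Polynomial.leadingCoeff, hdeg]
  ring

lemma fd_iterate_eval (P : Polynomial ℝ) (m : ℕ) :
    fd^[m] (fun x => P.eval x) = fun x => (pfd^[m] P).eval x := by
  induction m with
  | zero => simp
  | succ k ih =>
    rw [Function.iterate_succ_apply', ih, fd_eval, Function.iterate_succ_apply']

lemma natDegree_pfd_iterate_le (P : Polynomial ℝ) (m : ℕ) :
    (pfd^[m] P).natDegree ≤ P.natDegree - m := by
  induction m with
  | zero => simp
  | succ k ih =>
    rw [Function.iterate_succ_apply']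
    have := natDegree_pfd_le (pfd^[k] P)
    omega

lemma pfd_iterate_eq_zero (P : Polynomial ℝ) (m : ℕ) (hm : P.natDegree < m) :
    pfd^[m] P = 0 := by
  induction m with
  | zero => omega
  | succ k ih =>
    rw [Function.iterate_succ_apply']
    rcases Nat.lt_or_ge P.natDegree k with h | h
    · rw [ih h]
      simpa using pfd_C 0
    · have hk : P.natDegree = k := by omega
      have hle : (pfd^[k] P).natDegree ≤ 0 := by
        have := natDegree_pfd_iterate_le P k
        omega
      rw [Polynomial.eq_C_of_natDegree_le_zero hle, pfd_C]

lemma daim_key (l0 s0 : ℝ → ℝ) (y : ℝ → ℝ)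
    (hy : ∀ x : ℝ, fd (fd y) x = l0 x * fd y x + s0 x * y x) :
    ∀ k : ℕ, ∀ x : ℝ, fd^[k + 2] y x
      = (daim l0 s0 k).1 x * fd y x + (daim l0 s0 k).2 x * y x := by
  intro k
  induction k with
  | zero =>
    intro x
    have h2 : fd^[2] y = fd (fd y) := by
      rw [Function.iterate_succ_apply', Function.iterate_one]
    rw [h2, hy x]
    simp [daim]
  | succ k ih =>
    intro x
    have h1 : fd y (x + 1) = fd y x + (l0 x * fd y x + s0 x * y x) := by
      have := hy x
      simp only [fd] at this ⊢
      linarith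
    have h2 : y (x + 1) = y x + fd y x := by
      simp only [fd]; ring
    have hstep : fd^[k + 1 + 2] y = fd (fd^[k + 2] y) := by
      rw [show k + 1 + 2 = (k + 2) + 1 by ring, Function.iterate_succ_apply']
    rw [hstep]
    show fd^[k+2] y (x + 1) - fd^[k+2] y x = _
    rw [ih (x + 1), ih x, h1, h2]
    simp only [daim, fd]
    ring

theorem stmt_5 (l0 s0 : ℝ → ℝ) (n : ℕ) (hn : 1 ≤ n)
    (y : ℝ → ℝ) (P : Polynomial ℝ) (hyP : ∀ x : ℝ, y x = P.eval x)
    (hdeg : P.natDegree = n)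
    (hy : ∀ x : ℝ, fd (fd y) x = l0 x * fd y x + s0 x * y x) :
    (∀ x : ℝ, fd y x ≠ 0 →
        (daim l0 s0 n).2 x * (daim l0 s0 (n - 1)).1 x
          - (daim l0 s0 (n - 1)).2 x * (daim l0 s0 n).1 x = 0) ∧
      {x : ℝ | (daim l0 s0 n).2 x * (daim l0 s0 (n - 1)).1 x
          - (daim l0 s0 (n - 1)).2 x * (daim l0 s0 n).1 x ≠ 0}.Finite ∧
      {x : ℝ | (daim l0 s0 n).2 x * (daim l0 s0 (n - 1)).1 x
          - (daim l0 s0 (n - 1)).2 x * (daim l0 s0 n).1 x ≠ 0}.ncard ≤ n - 1 := by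
  have hyfun : y = fun x => P.eval x := funext hyP
  -- the iterated differences of y vanish at orders n+1 and n+2
  have hvanish : ∀ m : ℕ, n < m → ∀ x : ℝ, fd^[m] y x = 0 := by
    intro m hm x
    rw [hyfun, fd_iterate_eval, pfd_iterate_eq_zero P m (by omega)]
    simp
  have key := daim_key l0 s0 y hy
  -- the two linear relations
  have hrel1 : ∀ x : ℝ, (daim l0 s0 (n - 1)).1 x * fd y x
      + (daim l0 s0 (n - 1)).2 x * y x = 0 := by
    intro x
    have := key (n - 1) x
    rw [show n - 1 + 2 = n + 1 by omega] at this
    rw [← this]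
    exact hvanish (n + 1) (by omega) x
  have hrel2 : ∀ x : ℝ, (daim l0 s0 n).1 x * fd y x
      + (daim l0 s0 n).2 x * y x = 0 := by
    intro x
    have := key n x
    rw [← this]
    exact hvanish (n + 2) (by omega) x
  -- main pointwise statement
  have hmain : ∀ x : ℝ, fd y x ≠ 0 →
      (daim l0 s0 n).2 x * (daim l0 s0 (n - 1)).1 x
        - (daim l0 s0 (n - 1)).2 x * (daim l0 s0 n).1 x = 0 := by
    intro x hx
    have h1 := hrel1 x
    have h2 := hrel2 x
    have hE : ((daim l0 s0 n).2 x * (daim l0 s0 (n - 1)).1 x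
        - (daim l0 s0 (n - 1)).2 x * (daim l0 s0 n).1 x) * fd y x = 0 := by
      linear_combination (daim l0 s0 n).2 x * h1 - (daim l0 s0 (n - 1)).2 x * h2
    exact (mul_eq_zero.mp hE).resolve_right hx
  -- the bad set is contained in the roots of `pfd P`
  have hQeval : ∀ x : ℝ, fd y x = (pfd P).eval x := by
    intro x
    rw [hyfun, fd_eval]
  have hQne : pfd P ≠ 0 := by
    intro h
    have hcoeff := pfd_coeff_pred hdeg hn
    rw [h] at hcoeff
    simp only [Polynomial.coeff_zero] at hcoeff
    have hP0 : P ≠ 0 := by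
      intro hP
      rw [hP] at hdeg
      simp at hdeg
      omega
    have hlc : P.leadingCoeff ≠ 0 := Polynomial.leadingCoeff_ne_zero.mpr hP0
    have hn0 : (n : ℝ) ≠ 0 := Nat.cast_ne_zero.mpr (by omega)
    rcases mul_eq_zero.mp hcoeff.symm with h' | h'
    · exact hn0 h'
    · exact hlc h'
  have hsub : {x : ℝ | (daim l0 s0 n).2 x * (daim l0 s0 (n - 1)).1 x
      - (daim l0 s0 (n - 1)).2 x * (daim l0 s0 n).1 x ≠ 0}
      ⊆ {x : ℝ | (pfd P).IsRoot x} := by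
    intro x hx
    by_contra hroot
    exact hx (hmain x (by rw [hQeval x]; exact hroot))
  have hfinroots : {x : ℝ | (pfd P).IsRoot x}.Finite :=
    Polynomial.finite_setOf_isRoot hQne
  refine ⟨hmain, hfinroots.subset hsub, ?_⟩
  have hset : {x : ℝ | (pfd P).IsRoot x} = ↑(pfd P).roots.toFinset := by
    ext x
    simp [Multiset.mem_toFinset, Polynomial.mem_roots hQne]
  calc {x : ℝ | (daim l0 s0 n).2 x * (daim l0 s0 (n - 1)).1 x
          - (daim l0 s0 (n - 1)).2 x * (daim l0 s0 n).1 x ≠ 0}.ncard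
      ≤ {x : ℝ | (pfd P).IsRoot x}.ncard := Set.ncard_le_ncard hsub hfinroots
    _ = (pfd P).roots.toFinset.card := by rw [hset, Set.ncard_coe_finset]
    _ ≤ Multiset.card (pfd P).roots := Multiset.toFinset_card_le _
    _ ≤ (pfd P).natDegree := Polynomial.card_roots' _
    _ ≤ n - 1 := by have := natDegree_pfd_le P; omega
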